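/- Let V = {1,2,3,4,5,6} and define f : 2^V → ℝ by: f(∅) = 0; f(S) = 2 if |S| = 1; f(S) = 3 if |S ∩ {1,2,3}| = 1 and |S ∩ {4,5,6}| = 1; and f(S) = 4 if |S ∩ {1,2,3}| ≥ 2 or |S ∩ {4,5,6}| ≥ 2. Then: (a) f is non-decreasing and submodular; (b) for every partition of V into 3 (possibly empty) parts A_1, A_2, A_3, one has f(A_1) + f(A_2) + f(A_3) ≤ 11, and this bound 11 is attained; (c) there is a feasible fractional solution to the LP relaxation — namely α_{{1,2}} = α_{{2,3}} = α_{{1,3}} = α_{{4,5}} = α_{{5,6}} = α_{{4,6}} = 0.5, satisfying α_S ≥ 0, Σ_{S∋i} α_S = 1 for all i ∈ V, and Σ_S α_S = 3 — with objective value Σ_S α_S f(S) = 12. Hence the welfare-maximization integer program with 3 players with identical submodular valuation f has integrality gap at most 11/12, disproving the conjecture that such instances have zero integrality gap. -/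

import Mathlib

/-!
Each value of `f` is fixed by the hypotheses, so `f` is an explicit `ℕ`-valued function, and
monotonicity and submodularity can be decided over the 64 subsets of `Fin 6`. A set has value 4
exactly when it contains two points of one of the triples `{0, 1, 2}`, `{3, 4, 5}`; two disjoint
sets cannot both do so for the same triple, so by pigeonhole one of three disjoint parts has
value at most 3, and a partition is worth at most `4 + 4 + 3`. The fractional solution puts
weight `1/2` on the six pairs inside the triples, each of value 4, and every point lies in
exactly two of them.
-/

open Finset Function

lemma Finset.card_inter_add_card_inter_le {α : Type*} [DecidableEq α] {X Y : Finset α}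
    (h : Disjoint X Y) (C : Finset α) : #(X ∩ C) + #(Y ∩ C) ≤ #C := by
  rw [← card_union_of_disjoint (h.mono inter_subset_left inter_subset_left)]
  exact card_le_card (union_subset inter_subset_right inter_subset_right)

namespace WelfareGap

def IsHeavy (S : Finset (Fin 6)) : Prop :=
  2 ≤ #(S ∩ {0, 1, 2}) ∨ 2 ≤ #(S ∩ {3, 4, 5})

instance : DecidablePred IsHeavy := fun _ => inferInstanceAs (Decidable (_ ∨ _))

def value (S : Finset (Fin 6)) : ℕ :=
  if IsHeavy S then 4
  else if #(S ∩ {0, 1, 2}) = 1 ∧ #(S ∩ {3, 4, 5}) = 1 then 3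
  else if #S = 1 then 2
  else 0

lemma value_cases (S : Finset (Fin 6)) :
    (IsHeavy S ∧ value S = 4)
    ∨ (#(S ∩ {0, 1, 2}) = 1 ∧ #(S ∩ {3, 4, 5}) = 1 ∧ value S = 3)
    ∨ (#S = 1 ∧ value S = 2)
    ∨ (S = ∅ ∧ value S = 0) := by
  revert S; decide

lemma eq_value {f : Finset (Fin 6) → ℝ} (hf0 : f ∅ = 0) (hf1 : ∀ S, #S = 1 → f S = 2)
    (hf2 : ∀ S, #(S ∩ {0, 1, 2}) = 1 → #(S ∩ {3, 4, 5}) = 1 → f S = 3)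
    (hf3 : ∀ S, IsHeavy S → f S = 4) (S : Finset (Fin 6)) : f S = value S := by
  rcases value_cases S with ⟨h, hv⟩ | ⟨hA, hB, hv⟩ | ⟨h, hv⟩ | ⟨rfl, hv⟩ <;> rw [hv]
  · exact_mod_cast hf3 S h
  · exact_mod_cast hf2 S hA hB
  · exact_mod_cast hf1 S h
  · exact_mod_cast hf0

set_option maxRecDepth 10000 in
lemma value_mono : ∀ S T : Finset (Fin 6), S ⊆ T → value S ≤ value T := by decide

set_option maxRecDepth 10000 in
lemma value_submodular : ∀ T S : Finset (Fin 6), T ⊆ S → ∀ i,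
    value (insert i S) + value T ≤ value (insert i T) + value S := by decide

lemma value_of_isHeavy {S : Finset (Fin 6)} (h : IsHeavy S) : value S = 4 := if_pos h

lemma value_le_three {S : Finset (Fin 6)} (h : ¬IsHeavy S) : value S ≤ 3 := by
  unfold value; split_ifs <;> omega

lemma value_le_four (S : Finset (Fin 6)) : value S ≤ 4 := by
  unfold value; split_ifs <;> omega

lemma exists_not_isHeavy {P : Fin 3 → Finset (Fin 6)} (hP : Pairwise (Disjoint on P)) :
    ∃ k, ¬IsHeavy (P k) := by
  by_contra! hheavy
  -- two of the three parts are heavy in the same triple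
  obtain ⟨k, l, hkl, hsame⟩ := Fintype.exists_ne_map_eq_of_card_lt
    (fun k => decide (2 ≤ #(P k ∩ {0, 1, 2}))) (by simp)
  have hA := card_inter_add_card_inter_le (hP hkl) {0, 1, 2}
  have hB := card_inter_add_card_inter_le (hP hkl) {3, 4, 5}
  have hk := hheavy k
  have hl := hheavy l
  simp only [IsHeavy] at hk hl
  simp only [decide_eq_decide] at hsame
  simp only [show #({0, 1, 2} : Finset (Fin 6)) = 3 by rfl,
    show #({3, 4, 5} : Finset (Fin 6)) = 3 by rfl] at hA hB
  omega

lemma sum_value_le {P : Fin 3 → Finset (Fin 6)} (hP : Pairwise (Disjoint on P)) :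
    ∑ k, value (P k) ≤ 11 := by
  obtain ⟨k, hk⟩ := exists_not_isHeavy hP
  calc ∑ k, value (P k) = value (P k) + ∑ l ∈ univ.erase k, value (P l) :=
        (add_sum_erase _ _ (mem_univ k)).symm
    _ ≤ 3 + #(univ.erase k) • 4 :=
        add_le_add (value_le_three hk) (sum_le_card_nsmul _ _ _ fun l _ => value_le_four (P l))
    _ = 11 := by simp

def innerPairs : Finset (Finset (Fin 6)) := {{0, 1}, {1, 2}, {0, 2}, {3, 4}, {4, 5}, {3, 5}}

lemma card_filter_mem_innerPairs : ∀ i, #(innerPairs.filter (i ∈ ·)) = 2 := by decide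

lemma card_innerPairs : #innerPairs = 6 := by decide

lemma isHeavy_of_mem_innerPairs : ∀ S ∈ innerPairs, IsHeavy S := by decide

end WelfareGap

open WelfareGap

/-- The counterexample to Bikhchandani's conjecture: on `V = {1,…,6}` (encoded as
`Fin 6`, with `A = {0,1,2}` and `B = {3,4,5}` playing the roles of `{1,2,3}` and
`{4,5,6}`), the function `f` with `f(∅)=0`, `f(S)=2` for `|S|=1`, `f(S)=3` when
`|S∩A|=1` and `|S∩B|=1`, and `f(S)=4` when `|S∩A|≥2` or `|S∩B|≥2` is non-decreasing and
submodular; every partition into 3 parts has total value at most 11, and 11 is attained;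
while the fractional solution `α` assigning `1/2` to each of `{0,1},{1,2},{0,2},{3,4},
{4,5},{3,5}` is feasible for the LP relaxation (nonnegative, marginals 1, total mass 3)
with objective value 12.  Hence the integrality gap is at most `11/12`. -/
theorem welfare_integrality_gap_example
    (f : Finset (Fin 6) → ℝ)
    (hf0 : f ∅ = 0)
    (hf1 : ∀ S : Finset (Fin 6), S.card = 1 → f S = 2)
    (hf2 : ∀ S : Finset (Fin 6),
      (S ∩ ({0, 1, 2} : Finset (Fin 6))).card = 1 →
      (S ∩ ({3, 4, 5} : Finset (Fin 6))).card = 1 → f S = 3)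
    (hf3 : ∀ S : Finset (Fin 6),
      (2 ≤ (S ∩ ({0, 1, 2} : Finset (Fin 6))).card
        ∨ 2 ≤ (S ∩ ({3, 4, 5} : Finset (Fin 6))).card) → f S = 4)
    (α : Finset (Fin 6) → ℝ)
    (hα : ∀ S : Finset (Fin 6),
      α S = if S = {0, 1} ∨ S = {1, 2} ∨ S = {0, 2}
              ∨ S = {3, 4} ∨ S = {4, 5} ∨ S = {3, 5} then 1 / 2 else 0) :
    -- (a) f is non-decreasing and submodular
    (∀ S T : Finset (Fin 6), S ⊆ T → f S ≤ f T)
    ∧ (∀ T S : Finset (Fin 6), T ⊆ S → ∀ i : Fin 6,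
        f (insert i S) - f S ≤ f (insert i T) - f T)
    -- (b) every partition into 3 (possibly empty) parts has value at most 11, attained
    ∧ (∀ P : Fin 3 → Finset (Fin 6),
        (∀ k l : Fin 3, k ≠ l → Disjoint (P k) (P l)) →
        Finset.univ.biUnion P = Finset.univ →
        ∑ k : Fin 3, f (P k) ≤ 11)
    ∧ (∃ P : Fin 3 → Finset (Fin 6),
        (∀ k l : Fin 3, k ≠ l → Disjoint (P k) (P l))
        ∧ Finset.univ.biUnion P = Finset.univ
        ∧ ∑ k : Fin 3, f (P k) = 11)
    -- (c) α is feasible for the LP relaxation with objective value 12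
    ∧ (∀ S : Finset (Fin 6), 0 ≤ α S)
    ∧ (∀ i : Fin 6, ∑ S ∈ Finset.univ.filter (fun S : Finset (Fin 6) => i ∈ S), α S = 1)
    ∧ (∑ S : Finset (Fin 6), α S = 3)
    ∧ (∑ S : Finset (Fin 6), α S * f S = 12) := by
  obtain rfl : f = fun S => (value S : ℝ) := funext (eq_value hf0 hf1 hf2 hf3)
  obtain rfl : α = fun S => if S ∈ innerPairs then 1 / 2 else 0 :=
    funext fun S => by simp only [hα, innerPairs, mem_insert, mem_singleton]
  beta_reduce
  refine ⟨fun S T h => ?_, fun T S h i => ?_, fun P hP _ => ?_,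
    ⟨![{0, 1}, {3, 4}, {2, 5}], by decide, by decide, ?_⟩,
    fun S => by positivity, fun i => ?_, ?_, ?_⟩
  · exact_mod_cast value_mono S T h
  · have : (value (insert i S) + value T : ℝ) ≤ value (insert i T) + value S := by
      exact_mod_cast value_submodular T S h i
    linarith
  · exact_mod_cast sum_value_le hP
  · exact_mod_cast (by decide : ∑ k, value (![{0, 1}, {3, 4}, {2, 5}] k) = 11)
  · rw [sum_ite_mem, inter_comm, inter_filter, inter_univ, sum_const,
      card_filter_mem_innerPairs]
    norm_num
  · rw [sum_ite_mem, univ_inter, sum_const, card_innerPairs]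
    norm_num
  · simp only [ite_mul, zero_mul]
    rw [sum_ite_mem, univ_inter,
      sum_congr rfl fun S hS => by rw [value_of_isHeavy (isHeavy_of_mem_innerPairs S hS)],
      sum_const, card_innerPairs]
    norm_num
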